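/- Let K be a field. Let B = K⟨a₂^∨, a₁₂^∨, a₂₁^∨⟩ be the free graded algebra with |a₁₂^∨| = |a₂₁^∨| = 0, |a₂^∨| = −1, and differential determined by d(a₂^∨) = a₂₁^∨ a₁₂^∨, d(a₁₂^∨) = d(a₂₁^∨) = 0 and the graded Leibniz rule. Let A be the Hopf-link DG-algebra K⟨c₁₂, c₂₁, c₁, c₂, s₁, t₁, k₁, l₁, u₁⟩ with differential d c₁ = s₁ + c₁₂c₂₁, d c₂ = c₂₁c₁₂, d k₁ = s₁ + t₁ − s₁t₁, d l₁ = s₁ + t₁ − t₁s₁, d u₁ = l₁ − k₁ + k₁s₁ − s₁l₁ and d = 0 on the other generators. Then: (1) the algebra map i : B → A with i(a₂^∨) = c₂, i(a₁₂^∨) = c₁₂, i(a₂₁^∨) = c₂₁ is a map of DG-algebras; (2) the algebra map p : A → B with p(c₂) = a₂^∨, p(c₁₂) = a₁₂^∨, p(c₂₁) = a₂₁^∨, p(c₁) = 0, p(s₁) = −a₁₂^∨a₂₁^∨, p(t₁) = a₁₂^∨a₂₁^∨, p(k₁) = p(l₁) = a₁₂^∨ a₂^∨ a₂₁^∨, p(u₁)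 = a₁₂^∨ a₂^∨ a₂^∨ a₂₁^∨ is a map of DG-algebras; and (3) p ∘ i = id_B, so B is a retract of A in the category of DG-algebras. -/

import Mathlib

/-- Generators of the Hopf-link Chekanov–Eliashberg DG-algebra `A`. -/
inductive HopfGen : Type
  | c12 | c21 | c1 | c2 | s1 | t1 | k1 | l1 | u1
  deriving DecidableEq

/-- Generators of `B = K⟨a₂^∨, a₁₂^∨, a₂₁^∨⟩`. -/
inductive BGen : Type
  | a2 | a12 | a21
  deriving DecidableEq

/-- Signs `(−1)^{|g|}` for the `A`-generators. -/
def hopfSign (K : Type) [Field K] : HopfGen → K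
  | .c1 => -1 | .c2 => -1 | .k1 => -1 | .l1 => -1 | _ => 1

/-- Signs `(−1)^{|g|}` for the `B`-generators: `|a₂^∨| = −1`, `|a₁₂^∨| = |a₂₁^∨| = 0`. -/
def bSign (K : Type) [Field K] : BGen → K
  | .a2 => -1 | _ => 1

open HopfGen BGen in
/-- Let `B = K⟨a₂^∨, a₁₂^∨, a₂₁^∨⟩` with `d(a₂^∨) = a₂₁^∨ a₁₂^∨` and let
`A` be the Hopf-link DG-algebra.  Then (1) the algebra map `i : B → A`,
`a₂^∨ ↦ c₂, a₁₂^∨ ↦ c₁₂, a₂₁^∨ ↦ c₂₁` is a DG-algebra map; (2) the algebra map `p : A → B`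
with `p(c₂) = a₂^∨`, `p(c₁₂) = a₁₂^∨`, `p(c₂₁) = a₂₁^∨`, `p(c₁) = 0`,
`p(s₁) = −a₁₂^∨a₂₁^∨`, `p(t₁) = a₁₂^∨a₂₁^∨`, `p(k₁) = p(l₁) = a₁₂^∨ a₂^∨ a₂₁^∨`,
`p(u₁) = a₁₂^∨ a₂^∨ a₂^∨ a₂₁^∨` is a DG-algebra map; and (3) `p ∘ i = id_B`, so `B` is a
retract of `A` in the category of DG-algebras.  Differentials are degree-1 derivations for
the graded Leibniz rule implemented via the parity automorphisms `σA`, `σB`. -/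
theorem stmt_10 (K : Type) [Field K]
    (σA : FreeAlgebra K HopfGen →ₐ[K] FreeAlgebra K HopfGen)
    (hσA : σA = FreeAlgebra.lift K (fun g => hopfSign K g • FreeAlgebra.ι K g))
    (σB : FreeAlgebra K BGen →ₐ[K] FreeAlgebra K BGen)
    (hσB : σB = FreeAlgebra.lift K (fun g => bSign K g • FreeAlgebra.ι K g))
    (dA : FreeAlgebra K HopfGen →ₗ[K] FreeAlgebra K HopfGen)
    (hLeibA : ∀ x y, dA (x * y) = dA x * y + σA x * dA y)
    (hc1 : dA (FreeAlgebra.ι K c1)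
      = FreeAlgebra.ι K s1 + FreeAlgebra.ι K c12 * FreeAlgebra.ι K c21)
    (hc2 : dA (FreeAlgebra.ι K c2) = FreeAlgebra.ι K c21 * FreeAlgebra.ι K c12)
    (hk1 : dA (FreeAlgebra.ι K k1)
      = FreeAlgebra.ι K s1 + FreeAlgebra.ι K t1 - FreeAlgebra.ι K s1 * FreeAlgebra.ι K t1)
    (hl1 : dA (FreeAlgebra.ι K l1)
      = FreeAlgebra.ι K s1 + FreeAlgebra.ι K t1 - FreeAlgebra.ι K t1 * FreeAlgebra.ι K s1)
    (hu1 : dA (FreeAlgebra.ι K u1)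
      = FreeAlgebra.ι K l1 - FreeAlgebra.ι K k1
        + FreeAlgebra.ι K k1 * FreeAlgebra.ι K s1
        - FreeAlgebra.ι K s1 * FreeAlgebra.ι K l1)
    (hs1 : dA (FreeAlgebra.ι K s1) = 0) (ht1 : dA (FreeAlgebra.ι K t1) = 0)
    (hc12 : dA (FreeAlgebra.ι K c12) = 0) (hc21 : dA (FreeAlgebra.ι K c21) = 0)
    (dB : FreeAlgebra K BGen →ₗ[K] FreeAlgebra K BGen)
    (hLeibB : ∀ x y, dB (x * y) = dB x * y + σB x * dB y)
    (ha2 : dB (FreeAlgebra.ι K a2) = FreeAlgebra.ι K a21 * FreeAlgebra.ι K a12)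
    (ha12 : dB (FreeAlgebra.ι K a12) = 0) (ha21 : dB (FreeAlgebra.ι K a21) = 0)
    (i : FreeAlgebra K BGen →ₐ[K] FreeAlgebra K HopfGen)
    (hi : i = FreeAlgebra.lift K (fun g => match g with
      | .a2 => FreeAlgebra.ι K c2
      | .a12 => FreeAlgebra.ι K c12
      | .a21 => FreeAlgebra.ι K c21))
    (p : FreeAlgebra K HopfGen →ₐ[K] FreeAlgebra K BGen)
    (hp : p = FreeAlgebra.lift K (fun g => match g with
      | .c2 => FreeAlgebra.ι K a2
      | .c12 => FreeAlgebra.ι K a12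
      | .c21 => FreeAlgebra.ι K a21
      | .c1 => 0
      | .s1 => -(FreeAlgebra.ι K a12 * FreeAlgebra.ι K a21)
      | .t1 => FreeAlgebra.ι K a12 * FreeAlgebra.ι K a21
      | .k1 => FreeAlgebra.ι K a12 * FreeAlgebra.ι K a2 * FreeAlgebra.ι K a21
      | .l1 => FreeAlgebra.ι K a12 * FreeAlgebra.ι K a2 * FreeAlgebra.ι K a21
      | .u1 => FreeAlgebra.ι K a12 * FreeAlgebra.ι K a2 * FreeAlgebra.ι K a2
                * FreeAlgebra.ι K a21)) :
    -- (1) `i` is a chain map, hence a DG-algebra map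
    (i.toLinearMap ∘ₗ dB = dA ∘ₗ i.toLinearMap)
    -- (2) `p` is a chain map, hence a DG-algebra map
    ∧ (p.toLinearMap ∘ₗ dA = dB ∘ₗ p.toLinearMap)
    -- (3) `p ∘ i = id`, so `B` is a retract of `A`
    ∧ (p.comp i = AlgHom.id K (FreeAlgebra K BGen)) := by
  subst hσA hσB hi hp
  have dA1 : dA 1 = 0 := by
    have h := hLeibA 1 1
    simp only [one_mul, mul_one, map_one] at h
    exact (right_eq_add.mp h)
  have dB1 : dB 1 = 0 := by
    have h := hLeibB 1 1
    simp only [one_mul, mul_one, map_one] at h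
    exact (right_eq_add.mp h)
  have dAalg : ∀ r : K, dA (algebraMap K _ r) = 0 := fun r => by
    rw [Algebra.algebraMap_eq_smul_one, map_smul, dA1, smul_zero]
  have dBalg : ∀ r : K, dB (algebraMap K _ r) = 0 := fun r => by
    rw [Algebra.algebraMap_eq_smul_one, map_smul, dB1, smul_zero]
  set σA := FreeAlgebra.lift K (fun g => hopfSign K g • FreeAlgebra.ι K g) with hσA
  set σB := FreeAlgebra.lift K (fun g => bSign K g • FreeAlgebra.ι K g) with hσB
  set i := FreeAlgebra.lift K (fun g : BGen => match g with
      | .a2 => FreeAlgebra.ι K c2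
      | .a12 => FreeAlgebra.ι K c12
      | .a21 => FreeAlgebra.ι K c21) with hi
  set p := FreeAlgebra.lift K (fun g : HopfGen => match g with
      | .c2 => FreeAlgebra.ι K a2
      | .c12 => FreeAlgebra.ι K a12
      | .c21 => FreeAlgebra.ι K a21
      | .c1 => 0
      | .s1 => -(FreeAlgebra.ι K a12 * FreeAlgebra.ι K a21)
      | .t1 => FreeAlgebra.ι K a12 * FreeAlgebra.ι K a21
      | .k1 => FreeAlgebra.ι K a12 * FreeAlgebra.ι K a2 * FreeAlgebra.ι K a21
      | .l1 => FreeAlgebra.ι K a12 * FreeAlgebra.ι K a2 * FreeAlgebra.ι K a21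
      | .u1 => FreeAlgebra.ι K a12 * FreeAlgebra.ι K a2 * FreeAlgebra.ι K a2
                * FreeAlgebra.ι K a21) with hp
  have hiσ : ∀ x, i (σB x) = σA (i x) := by
    have : i.comp σB = σA.comp i := by
      apply FreeAlgebra.hom_ext
      funext g
      cases g <;>
        simp [hσA, hσB, hi, bSign, hopfSign, FreeAlgebra.lift_ι_apply]
    intro x; exact DFunLike.congr_fun this x
  have hpσ : ∀ x, p (σA x) = σB (p x) := by
    have : p.comp σA = σB.comp p := by
      apply FreeAlgebra.hom_ext
      funext g
      cases g <;>
        simp [hσA, hσB, hp, bSign, hopfSign, FreeAlgebra.lift_ι_apply, mul_assoc]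
    intro x; exact DFunLike.congr_fun this x
  have keyi : ∀ x, i (dB x) = dA (i x) := by
    intro x
    induction x with
    | grade0 r => simp [dBalg, dAalg, AlgHom.commutes]
    | grade1 g =>
      cases g <;>
        simp [hi, ha2, ha12, ha21, hc2, hc12, hc21, FreeAlgebra.lift_ι_apply]
    | mul x y hx hy =>
      rw [hLeibB, map_add, map_mul, map_mul, hx, hy, hiσ, map_mul, hLeibA]
    | add x y hx hy => rw [map_add, map_add, hx, hy, ← map_add, ← map_add]
  have dBX : dB (FreeAlgebra.ι K a12 * FreeAlgebra.ι K a21) = 0 := by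
    rw [hLeibB, ha12, ha21, mul_zero, zero_mul, add_zero]
  have σBa12 : σB (FreeAlgebra.ι K a12) = FreeAlgebra.ι K a12 := by
    simp [hσB, bSign, FreeAlgebra.lift_ι_apply]
  have σBa2 : σB (FreeAlgebra.ι K a2) = -FreeAlgebra.ι K a2 := by
    simp [hσB, bSign, FreeAlgebra.lift_ι_apply]
  have dBY : dB (FreeAlgebra.ι K a12 * FreeAlgebra.ι K a2 * FreeAlgebra.ι K a21)
      = FreeAlgebra.ι K a12 * FreeAlgebra.ι K a21 * (FreeAlgebra.ι K a12 * FreeAlgebra.ι K a21) := by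
    rw [mul_assoc, hLeibB, ha12, zero_mul, zero_add, σBa12, hLeibB, ha2, ha21, mul_zero,
      add_zero]
    noncomm_ring
  have keyp : ∀ x, p (dA x) = dB (p x) := by
    intro x
    induction x with
    | grade0 r => simp [dBalg, dAalg, AlgHom.commutes]
    | grade1 g =>
      cases g
      · simp [hp, hc12, FreeAlgebra.lift_ι_apply, ha12]
      · simp [hp, hc21, FreeAlgebra.lift_ι_apply, ha21]
      · -- c1
        simp [hp, hc1, FreeAlgebra.lift_ι_apply]
      · -- c2
        simp [hp, hc2, FreeAlgebra.lift_ι_apply, ha2]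
      · -- s1
        simp [hp, hs1, FreeAlgebra.lift_ι_apply, dBX]
      · -- t1
        simp [hp, ht1, FreeAlgebra.lift_ι_apply, dBX]
      · -- k1
        rw [hk1]
        simp only [hp, map_sub, map_add, map_mul, FreeAlgebra.lift_ι_apply]
        rw [dBY]
        noncomm_ring
      · -- l1
        rw [hl1]
        simp only [hp, map_sub, map_add, map_mul, FreeAlgebra.lift_ι_apply]
        rw [dBY]
        noncomm_ring
      · -- u1
        rw [hu1]
        simp only [hp, map_sub, map_add, map_mul, FreeAlgebra.lift_ι_apply]
        have : dB (FreeAlgebra.ι K a12 * FreeAlgebra.ι K a2 * FreeAlgebra.ι K a2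
            * FreeAlgebra.ι K a21)
            = FreeAlgebra.ι K a12 * FreeAlgebra.ι K a21
              * (FreeAlgebra.ι K a12 * FreeAlgebra.ι K a2 * FreeAlgebra.ι K a21)
              - FreeAlgebra.ι K a12 * FreeAlgebra.ι K a2 * FreeAlgebra.ι K a21
              * (FreeAlgebra.ι K a12 * FreeAlgebra.ι K a21) := by
          rw [show FreeAlgebra.ι K a12 * FreeAlgebra.ι K a2 * FreeAlgebra.ι K a2
              * FreeAlgebra.ι K a21
              = FreeAlgebra.ι K a12 * (FreeAlgebra.ι K a2 * (FreeAlgebra.ι K a2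
                * FreeAlgebra.ι K a21)) by noncomm_ring]
          rw [hLeibB, ha12, zero_mul, zero_add, σBa12, hLeibB, ha2, σBa2, hLeibB, ha2, ha21,
            mul_zero, add_zero]
          noncomm_ring
        rw [this]
        noncomm_ring
    | mul x y hx hy =>
      rw [hLeibA, map_add, map_mul, map_mul, hx, hy, hpσ, map_mul, hLeibB]
    | add x y hx hy => rw [map_add, map_add, hx, hy, ← map_add, ← map_add]
  refine ⟨?_, ?_, ?_⟩
  · ext x; exact (keyi x).symm ▸ rfl
  · ext x; exact (keyp x).symm ▸ rfl
  · apply FreeAlgebra.hom_ext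
    funext g
    cases g <;> simp [hi, hp, FreeAlgebra.lift_ι_apply]
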